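/- Under the stated hypotheses, there exists a constant C > 0, depending only on N, C₃ and the diameter of Ω, such that for every index 1 ≤ i ≤ N, sup_{x ∈ Ω} |Σ_{j=1}^{N} A_ij(x) ∂u/∂x_j(x)| ≤ C. -/

import Mathlib

/-!
Fix `i` and restrict the flux `g(t) = ∑ⱼ Aᵢⱼ ∂ⱼu (x + t eᵢ)` to the chord of `Ω` through `x` in
direction `eᵢ`. There `g' ≥ -C₃`, and `g` vanishes at points of the chord on either side of `x`,
because `supp u` is a compact subset of `Ω`. The mean value theorem, applied from each of these
points, gives `|g(0)| ≤ C₃ · diam Ω`.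
-/

open MeasureTheory Set

noncomputable def pdN (N : ℕ) (i : Fin N) (f : EuclideanSpace ℝ (Fin N) → ℝ)
    (x : EuclideanSpace ℝ (Fin N)) : ℝ :=
  fderiv ℝ f x (EuclideanSpace.single i 1)

open Filter Topology

section Order

variable {α : Type*} [LinearOrder α] [TopologicalSpace α] [OrderTopology α]
  [DenselyOrdered α] {K U : Set α} {t : α}

theorem IsCompact.exists_ge_mem_diff [NoMaxOrder α] (hK : IsCompact K) (hU : IsOpen U)
    (hKU : K ⊆ U) (ht : t ∈ U) : ∃ b ∈ U \ K, t ≤ b := by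
  obtain ⟨m, hm, hm_ub⟩ := (hK.union isCompact_singleton).exists_isGreatest ⟨t, .inr rfl⟩
  have hmU : m ∈ U := by
    rcases hm with hm | rfl
    exacts [hKU hm, ht]
  obtain ⟨b, hbU, hmb⟩ : ∃ b, b ∈ U ∧ m < b :=
    ((eventually_nhdsWithin_of_eventually_nhds (hU.mem_nhds hmU)).and
      self_mem_nhdsWithin).exists (f := 𝓝[>] m)
  exact ⟨b, ⟨hbU, fun hbK => (hm_ub (.inl hbK)).not_gt hmb⟩,
    (hm_ub (.inr rfl)).trans hmb.le⟩

theorem IsCompact.exists_le_mem_diff [NoMinOrder α] (hK : IsCompact K) (hU : IsOpen U)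
    (hKU : K ⊆ U) (ht : t ∈ U) : ∃ a ∈ U \ K, a ≤ t :=
  IsCompact.exists_ge_mem_diff (α := αᵒᵈ) hK hU hKU ht

end Order

theorem abs_le_of_le_deriv_of_eq_zero {s : Set ℝ} (hs : Convex ℝ s) {g : ℝ → ℝ}
    (hg : ∀ t ∈ s, DifferentiableAt ℝ g t) {C D : ℝ} (hC : 0 ≤ C)
    (hg' : ∀ t ∈ s, -C ≤ deriv g t) {a t b : ℝ} (ha : a ∈ s) (hb : b ∈ s)
    (hat : a ≤ t) (htb : t ≤ b) (hga : g a = 0) (hgb : g b = 0)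
    (hta : t - a ≤ D) (hbt : b - t ≤ D) : |g t| ≤ C * D := by
  have ht : t ∈ s := hs.ordConnected.out ha hb ⟨hat, htb⟩
  have hmono := hs.mul_sub_le_image_sub_of_le_deriv
    (fun x hx => (hg x hx).continuousAt.continuousWithinAt)
    (fun x hx => (hg x (interior_subset hx)).differentiableWithinAt)
    (fun x hx => hg' x (interior_subset hx))
  have hleft := hmono a ha t ht hat
  have hright := hmono t ht b hb htb
  rw [abs_le]
  constructor <;> nlinarith

section Line

variable {E : Type*} [NormedAddCommGroup E] [NormedSpace ℝ E]

theorem isometry_add_smul (x : E) {v : E} (hv : ‖v‖ = 1) :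
    Isometry fun t : ℝ => x + t • v :=
  Isometry.of_dist_eq fun s t => by
    rw [dist_add_left, dist_eq_norm, ← sub_smul, norm_smul, hv, mul_one, Real.dist_eq,
      Real.norm_eq_abs]

theorem Convex.preimage_add_smul {Ω : Set E} (hΩ : Convex ℝ Ω) (x v : E) :
    Convex ℝ ((fun t : ℝ => x + t • v) ⁻¹' Ω) :=
  (hΩ.translate_preimage_right x).is_linear_preimage (IsLinearMap.isLinearMap_smul' v)

theorem abs_le_mul_diam_of_neg_lineDeriv_le {Ω K : Set E} (hΩo : IsOpen Ω)
    (hΩc : Convex ℝ Ω) (hΩb : Bornology.IsBounded Ω) (hK : IsClosed K) (hKΩ : K ⊆ Ω)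
    {F : E → ℝ} (hF : ∀ y ∉ K, F y = 0) {v : E} (hv : ‖v‖ = 1) {C : ℝ} (hC : 0 ≤ C)
    (hFd : ∀ y ∈ Ω, DifferentiableAt ℝ (fun s : ℝ => F (y + s • v)) 0)
    (hFd' : ∀ y ∈ Ω, -deriv (fun s : ℝ => F (y + s • v)) 0 ≤ C) {x : E} (hx : x ∈ Ω) :
    |F x| ≤ C * Metric.diam Ω := by
  set L : ℝ → E := fun t => x + t • v
  have hL : Isometry L := isometry_add_smul x hv
  have hI0 : (0 : ℝ) ∈ L ⁻¹' Ω := by simpa [L] using hx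
  have hK' : IsCompact (L ⁻¹' K) :=
    Metric.isCompact_of_isClosed_isBounded (hK.preimage hL.continuous)
      (hL.antilipschitz.isBounded_preimage (hΩb.subset hKΩ))
  have hKI : L ⁻¹' K ⊆ L ⁻¹' Ω := preimage_mono hKΩ
  have hIo : IsOpen (L ⁻¹' Ω) := hΩo.preimage hL.continuous
  obtain ⟨b, ⟨hbI, hbK⟩, h0b⟩ := hK'.exists_ge_mem_diff hIo hKI hI0
  obtain ⟨a, ⟨haI, haK⟩, ha0⟩ := hK'.exists_le_mem_diff hIo hKI hI0
  have hdiam {s t : ℝ} (hs : s ∈ L ⁻¹' Ω) (ht : t ∈ L ⁻¹' Ω) (hst : s ≤ t) :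
      t - s ≤ Metric.diam Ω := by
    rw [← abs_of_nonneg (sub_nonneg.2 hst), ← Real.dist_eq, ← hL.dist_eq]
    exact Metric.dist_le_diam_of_mem hΩb ht hs
  have hderiv (t : ℝ) (ht : t ∈ L ⁻¹' Ω) :
      DifferentiableAt ℝ (F ∘ L) t ∧ -C ≤ deriv (F ∘ L) t := by
    have hd := hFd _ ht
    have hd' := hFd' _ ht
    simp only [L, add_assoc, ← add_smul] at hd hd'
    change DifferentiableAt ℝ (fun s => (F ∘ L) (t + s)) 0 at hd
    change -deriv (fun s => (F ∘ L) (t + s)) 0 ≤ C at hd'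
    rw [differentiableAt_comp_add_left, add_zero] at hd
    rw [deriv_comp_const_add, add_zero] at hd'
    exact ⟨hd, by linarith⟩
  simpa [L] using abs_le_of_le_deriv_of_eq_zero (hΩc.preimage_add_smul x v)
    (fun t ht => (hderiv t ht).1) hC (fun t ht => (hderiv t ht).2) haI hbI ha0 h0b
    (hF _ haK) (hF _ hbK) (by simpa using hdiam haI hI0 ha0) (by simpa using hdiam hI0 hbI h0b)

end Line

theorem pdN_eq_zero_of_notMem_tsupport {N : ℕ} (j : Fin N) {u : EuclideanSpace ℝ (Fin N) → ℝ}
    {y : EuclideanSpace ℝ (Fin N)} (hy : y ∉ tsupport u) : pdN N j u y = 0 := by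
  simp [pdN, fderiv_of_notMem_tsupport ℝ hy]

theorem statement_14_general (N : ℕ) (C3 D : ℝ)
    (hC3 : 0 < C3) (hD : 0 < D) :
    ∃ C > 0,
      ∀ (Ω : Set (EuclideanSpace ℝ (Fin N))), IsOpen Ω → Ω.Nonempty → Convex ℝ Ω →
        Bornology.IsBounded Ω → Metric.diam Ω ≤ D →
        ∀ (C1 C2 : ℝ), 0 < C1 → 0 < C2 →
        ∀ (A : Fin N → Fin N → EuclideanSpace ℝ (Fin N) → ℝ)
          (u : EuclideanSpace ℝ (Fin N) → ℝ),
          (∀ i j : Fin N, Measurable (A i j)) →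
          (∀ i j : Fin N, ∀ x ∈ Ω, |A i j x| ≤ C1) →
          (∀ x ∈ Ω, |(Matrix.of fun i j : Fin N => A i j x).det|⁻¹ ≤ C2) →
          ContDiffOn ℝ 2 u Ω →
          HasCompactSupport u →
          tsupport u ⊆ Ω →
          (∀ i : Fin N, ∀ x ∈ Ω,
            DifferentiableAt ℝ (fun t : ℝ => ∑ j : Fin N,
                A i j (x + t • EuclideanSpace.single i (1 : ℝ)) *
                  pdN N j u (x + t • EuclideanSpace.single i (1 : ℝ))) 0) →
          (∀ i : Fin N, ∀ x ∈ Ω,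
            -deriv (fun t : ℝ => ∑ j : Fin N,
                A i j (x + t • EuclideanSpace.single i (1 : ℝ)) *
                  pdN N j u (x + t • EuclideanSpace.single i (1 : ℝ))) 0 ≤ C3) →
          ∀ i : Fin N, ∀ x ∈ Ω, |∑ j : Fin N, A i j x * pdN N j u x| ≤ C := by
  refine ⟨C3 * D, by positivity, ?_⟩
  intro Ω hΩo _ hΩc hΩb hΩD _ _ _ _ A u _ _ _ _ _ hsupp hdiff hderiv i x hx
  have hflux : ∀ y ∉ tsupport u, ∑ j, A i j y * pdN N j u y = 0 := fun y hy =>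
    Finset.sum_eq_zero fun j _ => by rw [pdN_eq_zero_of_notMem_tsupport j hy, mul_zero]
  calc |∑ j, A i j x * pdN N j u x|
      ≤ C3 * Metric.diam Ω :=
        abs_le_mul_diam_of_neg_lineDeriv_le hΩo hΩc hΩb (isClosed_tsupport u) hsupp hflux
          (by simp) hC3.le (hdiff i) (hderiv i) hx
    _ ≤ C3 * D := by gcongr

theorem statement_14 (N : ℕ) (hN : 1 ≤ N) (C3 D : ℝ)
    (hC3 : 0 < C3) (hD : 0 < D) :
    ∃ C > 0,
      ∀ (Ω : Set (EuclideanSpace ℝ (Fin N))), IsOpen Ω → Ω.Nonempty → Convex ℝ Ω →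
        Bornology.IsBounded Ω → Metric.diam Ω ≤ D →
        ∀ (C1 C2 : ℝ), 0 < C1 → 0 < C2 →
        ∀ (A : Fin N → Fin N → EuclideanSpace ℝ (Fin N) → ℝ)
          (u : EuclideanSpace ℝ (Fin N) → ℝ),
          (∀ i j : Fin N, Measurable (A i j)) →
          (∀ i j : Fin N, ∀ x ∈ Ω, |A i j x| ≤ C1) →
          (∀ x ∈ Ω, |(Matrix.of fun i j : Fin N => A i j x).det|⁻¹ ≤ C2) →
          ContDiffOn ℝ 2 u Ω →
          HasCompactSupport u →
          tsupport u ⊆ Ω →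
          (∀ i : Fin N, ∀ x ∈ Ω,
            DifferentiableAt ℝ (fun t : ℝ => ∑ j : Fin N,
                A i j (x + t • EuclideanSpace.single i (1 : ℝ)) *
                  pdN N j u (x + t • EuclideanSpace.single i (1 : ℝ))) 0) →
          (∀ i : Fin N, ∀ x ∈ Ω,
            -deriv (fun t : ℝ => ∑ j : Fin N,
                A i j (x + t • EuclideanSpace.single i (1 : ℝ)) *
                  pdN N j u (x + t • EuclideanSpace.single i (1 : ℝ))) 0 ≤ C3) →
          ∀ i : Fin N, ∀ x ∈ Ω, |∑ j : Fin N, A i j x * pdN N j u x| ≤ C :=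
  statement_14_general N C3 D hC3 hD
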